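/- Let q ≥ 2 and let 𝒯 = {X_1 → expr_1, …, X_n → expr_n} be an SLP representing T with |T| ≥ q. Then |T| - (q-1) = Σ vOcc(X_i) · (|t_i| - (q-1)), where the sum ranges over all i such that X_i has a nonterminal rule and |val(X_i)| ≥ q. -/

import Mathlib

/-- A straight line program over alphabet `α`: variables are `Fin n` (variable
`X_i` of the paper corresponds to index `i-1`), each with either a terminal
rule (a single character) or a nonterminal rule `X_i → X_j X_k` with `j,k < i`. -/
structure SLP (α : Type) where
  n : ℕ
  npos : 0 < n
  rule : Fin n → α ⊕ (Fin n × Fin n)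
  wf : ∀ i jk, rule i = Sum.inr jk → jk.1 < i ∧ jk.2 < i

namespace SLP

variable {α : Type}

/-- the string `val(X_i)` derived by a variable -/
def val (S : SLP α) (i : Fin S.n) : List α :=
  match h : S.rule i with
  | Sum.inl a => [a]
  | Sum.inr jk =>
    have _h1 := (S.wf i jk h).1
    have _h2 := (S.wf i jk h).2
    S.val jk.1 ++ S.val jk.2
termination_by i.val

/-- the last variable `X_n` -/
def lastIdx (S : SLP α) : Fin S.n := ⟨S.n - 1, Nat.sub_lt S.npos Nat.one_pos⟩

/-- the string `T` represented by the SLP -/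
def text (S : SLP α) : List α := S.val S.lastIdx

/-- `T([i:j])`: the (1-based, inclusive) substring of a string -/
def substr (T : List α) (i j : ℕ) : List α := (T.drop (i - 1)).take (j + 1 - i)

/-- `pre(T,q)` -/
def spre (T : List α) (q : ℕ) : List α := T.take q

/-- `suf(T,q)` -/
def ssuf (T : List α) (q : ℕ) : List α := T.drop (T.length - q)

/-- `pre([b:e],q)` for intervals of positions -/
def ipre (b e q : ℕ) : Finset ℕ := Finset.Icc b (min (b + q - 1) e)

/-- `suf([b:e],q)` for intervals of positions -/
def isuf (b e q : ℕ) : Finset ℕ := Finset.Icc (max b (e + 1 - q)) e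

/-- `Occ(T,P)`: the set of (1-based) occurrences of `P` in `T` -/
def Occ [DecidableEq α] (T P : List α) : Finset ℕ :=
  (Finset.Icc 1 T.length).filter fun k => substr T k (k + P.length - 1) = P

/-- the multiset of labels of the nodes of the derivation tree rooted at
a node labeled `X_i` -/
def occsFrom (S : SLP α) (i : Fin S.n) : Multiset (Fin S.n) :=
  match h : S.rule i with
  | Sum.inl _ => {i}
  | Sum.inr jk =>
    have _h1 := (S.wf i jk h).1
    have _h2 := (S.wf i jk h).2
    i ::ₘ (S.occsFrom jk.1 + S.occsFrom jk.2)
termination_by i.val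

/-- `vOcc(X_i)`: the number of nodes of the derivation tree labeled `X_i` -/
def vOcc (S : SLP α) (i : Fin S.n) : ℕ := (S.occsFrom S.lastIdx).count i

/-- the string `t_i = suf(val(X_{ℓ(i)}),q-1) pre(val(X_{r(i)}),q-1)`
(and `[]` for a terminal rule) -/
def tstr (S : SLP α) (q : ℕ) (i : Fin S.n) : List α :=
  match S.rule i with
  | Sum.inl _ => []
  | Sum.inr jk => ssuf (S.val jk.1) (q - 1) ++ spre (S.val jk.2) (q - 1)

/-- `label(X_i) = t_i([q:|t_i|])` -/
def labelStr (S : SLP α) (q : ℕ) (i : Fin S.n) : List α := (S.tstr q i).drop (q - 1)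

/-- Nodes of the derivation tree are represented by the path from the root
(`false` = go to left child, `true` = go to right child).  `descend i p`
returns the label of the node reached from a node labeled `X_i` by path `p`. -/
def descend (S : SLP α) : Fin S.n → List Bool → Option (Fin S.n)
  | i, [] => some i
  | i, b :: p =>
    match S.rule i with
    | Sum.inl _ => none
    | Sum.inr jk => S.descend (if b then jk.2 else jk.1) p

/-- the label of the node of the derivation tree reached by path `p` from the root -/
def nodeVar (S : SLP α) (p : List Bool) : Option (Fin S.n) := S.descend S.lastIdx p

/-- `p` is a valid node of the derivation tree -/
def IsNode (S : SLP α) (p : List Bool) : Prop := (S.nodeVar p).isSome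

/-- the 0-based offset in `val(X_i)` of the part derived below path `p` -/
def offsetFrom (S : SLP α) : Fin S.n → List Bool → ℕ
  | _, [] => 0
  | i, b :: p =>
    match S.rule i with
    | Sum.inl _ => 0
    | Sum.inr jk =>
      if b then (S.val jk.1).length + S.offsetFrom jk.2 p
      else S.offsetFrom jk.1 p

/-- the 0-based offset in `T` of the interval derived by node `p` -/
def offset (S : SLP α) (p : List Bool) : ℕ := S.offsetFrom S.lastIdx p

/-- `itv(v)`: the (1-based) interval of positions of `T` derived by node `p` -/
def itv (S : SLP α) (p : List Bool) : Finset ℕ :=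
  match S.nodeVar p with
  | some i => Finset.Icc (S.offset p + 1) (S.offset p + (S.val i).length)
  | none => ∅

/-- `p = ξ(b,e)`: `p` is the deepest node whose interval contains `[b:e]`,
i.e. `itv(p) ⊇ [b:e]` and no proper descendant of `p` satisfies this. -/
def Stabs (S : SLP α) (p : List Bool) (b e : ℕ) : Prop :=
  S.IsNode p ∧ Finset.Icc b e ⊆ S.itv p ∧
  ∀ p' : List Bool, p <+: p' → p ≠ p' → S.IsNode p' → ¬ Finset.Icc b e ⊆ S.itv p'

/-- `X_j` is a right `q`-gram neighbor of `X_i` -/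
def RightNbr (S : SLP α) (q : ℕ) (i j : Fin S.n) : Prop :=
  i ≠ j ∧ ∃ u p p', 1 ≤ u ∧ u + q ≤ S.text.length ∧
    S.Stabs p u (u + q - 1) ∧ S.nodeVar p = some i ∧
    S.Stabs p' (u + 1) (u + q) ∧ S.nodeVar p' = some j

/-- `lm_q(X_i)`: the last variable of length `≥ q` on the sequence `i, ℓ(i), ℓ(ℓ(i)), …`
(meaningful when `|val(X_i)| ≥ q`) -/
def lm (S : SLP α) (q : ℕ) (i : Fin S.n) : Fin S.n :=
  match h : S.rule i with
  | Sum.inl _ => i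
  | Sum.inr jk =>
    have := (S.wf i jk h).1
    if (S.val jk.1).length < q then i else S.lm q jk.1
termination_by i.val

/-- `rm_q(X_i)`: the last variable of length `≥ q` on the sequence `i, r(i), r(r(i)), …` -/
def rm (S : SLP α) (q : ℕ) (i : Fin S.n) : Fin S.n :=
  match h : S.rule i with
  | Sum.inl _ => i
  | Sum.inr jk =>
    have := (S.wf i jk h).2
    if (S.val jk.2).length < q then i else S.rm q jk.2
termination_by i.val

/-- `lm_q` returning `null` (`none`) when `|val(X_i)| < q` -/
def lmOpt (S : SLP α) (q : ℕ) (i : Fin S.n) : Option (Fin S.n) :=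
  if (S.val i).length < q then none else some (S.lm q i)

/-- `rm_q` returning `null` (`none`) when `|val(X_i)| < q` -/
def rmOpt (S : SLP α) (q : ℕ) (i : Fin S.n) : Option (Fin S.n) :=
  if (S.val i).length < q then none else some (S.rm q i)

/-- `LSpine S i k`: `k` occurs in the sequence `i, ℓ(i), ℓ(ℓ(i)), …`
(the leftmost path of the derivation subtree rooted at a node labeled `X_i`) -/
inductive LSpine (S : SLP α) : Fin S.n → Fin S.n → Prop
  | refl (i : Fin S.n) : LSpine S i i
  | step {i k : Fin S.n} {jk : Fin S.n × Fin S.n} :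
      S.rule i = Sum.inr jk → LSpine S jk.1 k → LSpine S i k

end SLP

/-!
Every length-`q` window of `val(X_i)` either lies inside `val(X_ℓ(i))`, lies inside
`val(X_r(i))`, or straddles the split point; the straddling windows are exactly the
`|t_i| - (q-1)` windows of `t_i`. Unfolding this recursively down the derivation tree counts
every window of `T` once, at the lowest node covering it. In truncated subtraction the terms
of leaves and of nodes with `|val(X_i)| < q` vanish, so no case distinction is needed.
-/

theorem Multiset.sum_map_eq_sum_count_nsmul {ι M : Type*} [Fintype ι] [DecidableEq ι]
    [AddCommMonoid M] (s : Multiset ι) (f : ι → M) :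
    (s.map f).sum = ∑ i, s.count i • f i := by
  rw [Finset.sum_multiset_map_count]
  refine Finset.sum_subset (Finset.subset_univ _) fun i _ hi => ?_
  rw [Multiset.count_eq_zero_of_notMem (by simpa using hi), zero_smul]

namespace SLP

variable {α : Type} (S : SLP α) {i : Fin S.n}

theorem val_of_rule_inl {a : α} (h : S.rule i = .inl a) : S.val i = [a] := by
  rw [val]
  split <;> simp_all

theorem val_of_rule_inr {jk : Fin S.n × Fin S.n} (h : S.rule i = .inr jk) :
    S.val i = S.val jk.1 ++ S.val jk.2 := by
  rw [val]
  split <;> simp_all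

theorem occsFrom_of_rule_inl {a : α} (h : S.rule i = .inl a) : S.occsFrom i = {i} := by
  rw [occsFrom]
  split <;> simp_all

theorem occsFrom_of_rule_inr {jk : Fin S.n × Fin S.n} (h : S.rule i = .inr jk) :
    S.occsFrom i = i ::ₘ (S.occsFrom jk.1 + S.occsFrom jk.2) := by
  rw [occsFrom]
  split <;> simp_all

theorem tstr_of_rule_inl (q : ℕ) {a : α} (h : S.rule i = .inl a) : S.tstr q i = [] := by
  simp [tstr, h]

theorem length_tstr_of_rule_inr (q : ℕ) {jk : Fin S.n × Fin S.n} (h : S.rule i = .inr jk) :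
    (S.tstr q i).length = min (S.val jk.1).length (q - 1) + min (S.val jk.2).length (q - 1) := by
  simp only [tstr, h, ssuf, spre, List.length_append, List.length_drop, List.length_take]
  omega

theorem length_tstr_le_length_val (q : ℕ) (i : Fin S.n) :
    (S.tstr q i).length ≤ (S.val i).length := by
  match h : S.rule i with
  | .inl _ => simp [S.tstr_of_rule_inl q h]
  | .inr _ =>
    rw [S.length_tstr_of_rule_inr q h, S.val_of_rule_inr h, List.length_append]
    omega

theorem isRight_rule_and_le_length_val {q : ℕ} (h : q - 1 < (S.tstr q i).length) :
    (S.rule i).isRight = true ∧ q ≤ (S.val i).length := by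
  refine ⟨?_, by have := S.length_tstr_le_length_val q i; omega⟩
  match hr : S.rule i with
  | .inl _ => simp [S.tstr_of_rule_inl q hr] at h
  | .inr _ => rfl

theorem length_val_sub_eq_sum_occsFrom {q : ℕ} (hq : 2 ≤ q) (i : Fin S.n) :
    (S.val i).length - (q - 1) =
      ((S.occsFrom i).map fun j => (S.tstr q j).length - (q - 1)).sum := by
  match h : S.rule i with
  | .inl _ =>
    rw [S.val_of_rule_inl h, S.occsFrom_of_rule_inl h, Multiset.map_singleton,
      Multiset.sum_singleton, S.tstr_of_rule_inl q h, List.length_singleton, List.length_nil]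
    omega
  | .inr jk =>
    have := S.wf i jk h
    rw [S.occsFrom_of_rule_inr h, Multiset.map_cons, Multiset.sum_cons, Multiset.map_add,
      Multiset.sum_add, ← length_val_sub_eq_sum_occsFrom hq jk.1,
      ← length_val_sub_eq_sum_occsFrom hq jk.2, S.val_of_rule_inr h, List.length_append,
      S.length_tstr_of_rule_inr q h]
    omega
termination_by i.val

end SLP

theorem stmt11_general {α : Type} (q : ℕ) (hq : 2 ≤ q) (S : SLP α) :
    S.text.length - (q - 1) =
      ∑ i ∈ Finset.univ.filter
          (fun i : Fin S.n => (S.rule i).isRight = true ∧ q ≤ (S.val i).length),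
        S.vOcc i * ((S.tstr q i).length - (q - 1)) := by
  rw [Finset.sum_filter_of_ne fun i _ hi =>
      S.isRight_rule_and_le_length_val (Nat.lt_of_sub_ne_zero (right_ne_zero_of_mul hi)),
    SLP.text, S.length_val_sub_eq_sum_occsFrom hq, Multiset.sum_map_eq_sum_count_nsmul]
  simp only [SLP.vOcc, smul_eq_mul]

/-- `|T| - (q-1) = Σ vOcc(X_i)·(|t_i| - (q-1))`, the sum
ranging over nonterminal variables with `|val(X_i)| ≥ q`. -/
theorem stmt11 {α : Type} (q : ℕ) (hq : 2 ≤ q) (S : SLP α)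
    (hT : q ≤ S.text.length) :
    S.text.length - (q - 1) =
      ∑ i ∈ Finset.univ.filter
          (fun i : Fin S.n => (S.rule i).isRight = true ∧ q ≤ (S.val i).length),
        S.vOcc i * ((S.tstr q i).length - (q - 1)) :=
  stmt11_general q hq S
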